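/- Let H be a center-free group, and let 1 → H → E → G → 1 be an extension such that the induced outer action G → Out(H) is given. Then E is canonically isomorphic to the fiber product of Aut(H) → Out(H) and G → Out(H). -/

import Mathlib

/-- The subgroup of inner automorphisms `Inn(H) = range (MulAut.conj)` is normal in `Aut(H)`. -/
instance innerAut_normal (H : Type*) [Group H] :
    (MulAut.conj (G := H)).range.Normal := by
  constructor
  rintro n ⟨h, rfl⟩ a
  refine ⟨a h, ?_⟩
  ext x
  simp [MulAut.conj_apply, MulAut.mul_apply, map_mul, map_inv, mul_assoc]

/-- The outer automorphism group `Out(H) = Aut(H)/Inn(H)`. -/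
def OutAut (H : Type*) [Group H] : Type _ :=
  MulAut H ⧸ (MulAut.conj (G := H)).range

noncomputable instance (H : Type*) [Group H] : Group (OutAut H) :=
  inferInstanceAs (Group (MulAut H ⧸ (MulAut.conj (G := H)).range))

/-! On the image of `H`, conjugation `c` restricts to `MulAut.conj`, whose kernel is the
center. Hence the kernel of `e ↦ (c e, p e)` is `i (Z(H))`, trivial when `H` is center-free.
For the image: if `a` and `c e` have the same class in `Out(H)`, they differ by some
`MulAut.conj h = c (i h)`, so `(a, p e)` is the image of `e * i h`. -/

open Subgroup Function

theorem MulAut.ker_conj (H : Type*) [Group H] :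
    (MulAut.conj : H →* MulAut H).ker = center H := by
  ext h
  simp only [MonoidHom.mem_ker, mem_center_iff, MulEquiv.ext_iff, MulAut.conj_apply,
    MulAut.one_apply, mul_inv_eq_iff_eq_mul]
  exact ⟨fun hh g => (hh g).symm, fun hh g => (hh g).symm⟩

section Extension

variable {G H E : Type*} [Group G] [Group H] [Group E] {i : H →* E} {p : E →* G}
  {c : E →* MulAut H}

theorem comp_eq_conj_of_injective (hi : Injective i)
    (hc : ∀ (e : E) (h : H), i (c e h) = e * i h * e⁻¹) : c.comp i = MulAut.conj := by
  ext h h'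
  apply hi
  simp only [MonoidHom.comp_apply, hc, MulAut.conj_apply, map_mul, map_inv]

theorem ker_prod_eq_map_center (hex : i.range = p.ker) (hci : c.comp i = MulAut.conj) :
    (c.prod p).ker = (center H).map i := by
  rw [MonoidHom.ker_prod, ← hex, inf_comm, ← map_comap_eq, MonoidHom.comap_ker, hci,
    MulAut.ker_conj]

theorem range_prod_eq_pullback (hp : Surjective p) (hip : i.range ≤ p.ker)
    (hci : c.comp i = MulAut.conj) {φ : G →* OutAut H}
    (hφ : ∀ e : E, φ (p e) = (QuotientGroup.mk (c e) : OutAut H)) :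
    Set.range (c.prod p) = {x : MulAut H × G | (QuotientGroup.mk x.1 : OutAut H) = φ x.2} := by
  ext ⟨a, g⟩
  constructor
  · rintro ⟨e, he⟩
    simp only [MonoidHom.prod_apply, Prod.mk.injEq] at he
    simp only [Set.mem_ofPred_eq, ← he.1, ← he.2, hφ]
  · intro hag
    obtain ⟨e₀, rfl⟩ := hp g
    obtain ⟨h, hh⟩ : ∃ h, MulAut.conj h = (c e₀)⁻¹ * a :=
      QuotientGroup.eq.mp (hag.trans (hφ e₀)).symm
    have hph : p (i h) = 1 := hip ⟨h, rfl⟩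
    refine ⟨e₀ * i h, ?_⟩
    rw [MonoidHom.prod_apply, map_mul, map_mul, ← MonoidHom.comp_apply c i, hci, hh, hph,
      mul_inv_cancel_left, mul_one]

end Extension

/-- Let `H` be a center-free group and `1 → H → E → G → 1` an extension
(`i : H → E` injective, `p : E → G` surjective, `im i = ker p`).  Conjugation in `E` induces
`c : E → Aut(H)` (with `i (c e h) = e * i h * e⁻¹`), which descends to the outer action
`φ : G → Out(H)` (i.e. `φ ∘ p = mk ∘ c`).  Then `E` is canonically isomorphic, via
`e ↦ (c e, p e)`, to the fiber product of `Aut(H) → Out(H)` and `φ : G → Out(H)`, namely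
`{(a,g) | a mod Inn(H) = φ g}`. -/
theorem extension_eq_pullback_of_centerfree
    {G H E : Type*} [Group G] [Group H] [Group E]
    (hH : Subgroup.center H = ⊥)
    (i : H →* E) (p : E →* G)
    (hi : Function.Injective i) (hp : Function.Surjective p)
    (hex : i.range = p.ker)
    (c : E →* MulAut H)
    (hc : ∀ (e : E) (h : H), i (c e h) = e * i h * e⁻¹)
    (φ : G →* OutAut H)
    (hφ : ∀ e : E, φ (p e) = (QuotientGroup.mk (c e) : OutAut H)) :
    Function.Injective (fun e : E => ((c e, p e) : MulAut H × G)) ∧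
    Set.range (fun e : E => ((c e, p e) : MulAut H × G)) =
      {x : MulAut H × G | (QuotientGroup.mk x.1 : OutAut H) = φ x.2} := by
  have hci := comp_eq_conj_of_injective hi hc
  have hker : (c.prod p).ker = ⊥ := by rw [ker_prod_eq_map_center hex hci, hH, Subgroup.map_bot]
  exact ⟨(c.prod p).ker_eq_bot_iff.mp hker, range_prod_eq_pullback hp hex.le hci hφ⟩
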